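/- Let A : ℝ⁴ → ℝ⁴ be a smooth real one-form with components A_α, let φ, ψ : ℝ⁴ → ℂ be smooth, and let X : ℝ⁴ → ℝ⁴ be a smooth vector field with components X^β. Define D_α φ = ∂_α φ + i A_α φ, D_X φ = Σ_β X^β D_β φ, F_{αβ} = ∂_α A_β − ∂_β A_α, and the complex-valued one-form ω_α = φ · conj(D_α ψ). Then the Lie derivative of ω along X, defined componentwise by (ℒ_X ω)_α = Σ_β X^β ∂_β ω_α + Σ_β (∂_α X^β) ω_β, satisfies for every α: (ℒ_X ω)_α = D_X φ · conj(D_α ψ) + φ · conj(D_α D_X ψ) − i (Σ_β X^β F_{βα}) φ · conj(ψ), everywhere on ℝ⁴. -/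

import Mathlib

noncomputable abbrev E4 := EuclideanSpace ℝ (Fin 4)

/-- The gauge-covariant derivative `D_α φ = ∂_α φ + i A_α φ` on `ℝ⁴` associated with the
real one-form `A`. -/
noncomputable def covD4 (A : E4 → Fin 4 → ℝ) (α : Fin 4) (φ : E4 → ℂ) : E4 → ℂ :=
  fun x => fderiv ℝ φ x (EuclideanSpace.single α 1) + Complex.I * (A x α) * φ x

/-- The covariant derivative `D_X φ = Σ_β X^β D_β φ` along the vector field `X`. -/
noncomputable def covDX (A : E4 → Fin 4 → ℝ) (X : E4 → Fin 4 → ℝ) (φ : E4 → ℂ) : E4 → ℂ :=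
  fun x => ∑ β, (X x β : ℂ) * covD4 A β φ x

/-- The curvature two-form `F_{αβ} = ∂_α A_β − ∂_β A_α`. -/
noncomputable def curv (A : E4 → Fin 4 → ℝ) (α β : Fin 4) : E4 → ℝ :=
  fun x => fderiv ℝ (fun y => A y β) x (EuclideanSpace.single α 1) -
    fderiv ℝ (fun y => A y α) x (EuclideanSpace.single β 1)

/-- The Lie derivative of a (complex-valued) one-form `ω` along the vector field `X`,
componentwise: `(ℒ_X ω)_α = Σ_β X^β ∂_β ω_α + Σ_β (∂_α X^β) ω_β`. -/
noncomputable def lieDerivOneForm (X : E4 → Fin 4 → ℝ) (ω : Fin 4 → E4 → ℂ)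
    (α : Fin 4) : E4 → ℂ :=
  fun x => (∑ β, (X x β : ℂ) * fderiv ℝ (ω α) x (EuclideanSpace.single β 1)) +
    ∑ β, (fderiv ℝ (fun y => X y β) x (EuclideanSpace.single α 1) : ℂ) * ω β x

section helpers

lemma fderiv_clmcomp {T : Type*} [NormedAddCommGroup T] [NormedSpace ℝ T]
    {g : E4 → T} (L : T →L[ℝ] ℂ) {x : E4} (hg : DifferentiableAt ℝ g x) (v : E4) :
    fderiv ℝ (fun y => L (g y)) x v = L (fderiv ℝ g x v) := by
  rw [show (fun y => L (g y)) = L ∘ g from rfl, fderiv_comp x L.differentiableAt hg]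
  simp

lemma fderiv_conj' {g : E4 → ℂ} {x : E4} (hg : DifferentiableAt ℝ g x) (v : E4) :
    fderiv ℝ (fun y => (starRingEnd ℂ) (g y)) x v = (starRingEnd ℂ) (fderiv ℝ g x v) := by
  simpa using fderiv_clmcomp ((Complex.conjCLE : ℂ ≃L[ℝ] ℂ) : ℂ →L[ℝ] ℂ) hg v

lemma fderiv_ofReal' {g : E4 → ℝ} {x : E4} (hg : DifferentiableAt ℝ g x) (v : E4) :
    fderiv ℝ (fun y => ((g y : ℝ) : ℂ)) x v = ((fderiv ℝ g x v : ℝ) : ℂ) := by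
  simpa using fderiv_clmcomp Complex.ofRealCLM hg v

variable {A : E4 → Fin 4 → ℝ} {ψ : E4 → ℂ}

lemma contDiff_fderiv_apply (hψ : ContDiff ℝ (⊤ : ℕ∞) ψ) (v : E4) :
    ContDiff ℝ (⊤ : ℕ∞) (fun y => fderiv ℝ ψ y v) :=
  (hψ.fderiv_right (by simp)).clm_apply contDiff_const

lemma contDiff_ofReal_comp {g : E4 → ℝ} (hg : ContDiff ℝ (⊤ : ℕ∞) g) :
    ContDiff ℝ (⊤ : ℕ∞) (fun y => ((g y : ℝ) : ℂ)) :=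
  Complex.ofRealCLM.contDiff.comp hg

lemma contDiff_covD4 (hA : ContDiff ℝ (⊤ : ℕ∞) A) (hψ : ContDiff ℝ (⊤ : ℕ∞) ψ) (γ : Fin 4) :
    ContDiff ℝ (⊤ : ℕ∞) (covD4 A γ ψ) := by
  have : covD4 A γ ψ = fun y =>
      fderiv ℝ ψ y (EuclideanSpace.single γ 1) + Complex.I * ((A y γ : ℝ) : ℂ) * ψ y := rfl
  rw [this]
  exact (contDiff_fderiv_apply hψ _).add
    ((contDiff_const.mul (contDiff_ofReal_comp (contDiff_pi.1 hA γ))).mul hψ)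

lemma fderiv_covD4_apply (hA : ContDiff ℝ (⊤ : ℕ∞) A) (hψ : ContDiff ℝ (⊤ : ℕ∞) ψ) (γ : Fin 4)
    (x v : E4) :
    fderiv ℝ (covD4 A γ ψ) x v =
      fderiv ℝ (fun y => fderiv ℝ ψ y (EuclideanSpace.single γ 1)) x v +
      Complex.I * ((fderiv ℝ (fun y => A y γ) x v : ℝ) : ℂ) * ψ x +
      Complex.I * ((A x γ : ℝ) : ℂ) * fderiv ℝ ψ x v := by
  have h1 : DifferentiableAt ℝ (fun y => fderiv ℝ ψ y (EuclideanSpace.single γ 1)) x :=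
    ((contDiff_fderiv_apply hψ _).differentiable (by simp)).differentiableAt
  have h2 : DifferentiableAt ℝ (fun y => ((A y γ : ℝ) : ℂ)) x :=
    ((contDiff_ofReal_comp (contDiff_pi.1 hA γ)).differentiable (by simp)).differentiableAt
  have h3 : DifferentiableAt ℝ ψ x := (hψ.differentiable (by simp)).differentiableAt
  have heq : covD4 A γ ψ = fun y =>
      fderiv ℝ ψ y (EuclideanSpace.single γ 1) +
        Complex.I * (((A y γ : ℝ) : ℂ) * ψ y) := by
    funext y; simp [covD4, mul_assoc]
  rw [heq, fderiv_fun_add (g := fun y => Complex.I * (((A y γ : ℝ) : ℂ) * ψ y)) h1 ((h2.mul h3).const_mul _)]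
  simp only [ContinuousLinearMap.add_apply]
  rw [fderiv_const_mul (a := fun y => ((A y γ : ℝ) : ℂ) * ψ y) (h2.mul h3), fderiv_fun_mul h2 h3]
  simp only [ContinuousLinearMap.smul_apply, ContinuousLinearMap.add_apply, smul_eq_mul]
  rw [fderiv_ofReal' ((contDiff_pi.1 hA γ).differentiable (by simp)).differentiableAt]
  ring

end helpers

section helpers2

variable {A X : E4 → Fin 4 → ℝ} {ψ : E4 → ℂ}

lemma fderiv_covDX_apply (hA : ContDiff ℝ (⊤ : ℕ∞) A) (hX : ContDiff ℝ (⊤ : ℕ∞) X) (hψ : ContDiff ℝ (⊤ : ℕ∞) ψ)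
    (x v : E4) :
    fderiv ℝ (covDX A X ψ) x v =
      ∑ β, (((fderiv ℝ (fun y => X y β) x v : ℝ) : ℂ) * covD4 A β ψ x +
        ((X x β : ℝ) : ℂ) * fderiv ℝ (covD4 A β ψ) x v) := by
  have hXc : ∀ β, DifferentiableAt ℝ (fun y => ((X y β : ℝ) : ℂ)) x := fun β =>
    ((contDiff_ofReal_comp (contDiff_pi.1 hX β)).differentiable (by simp)).differentiableAt
  have hcov : ∀ β : Fin 4, DifferentiableAt ℝ (covD4 A β ψ) x := fun β =>
    ((contDiff_covD4 hA hψ β).differentiable (by simp)).differentiableAt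
  have heq : covDX A X ψ = fun y => ∑ β, ((X y β : ℝ) : ℂ) * covD4 A β ψ y := rfl
  rw [heq, fderiv_fun_sum (A := fun β y => ((X y β : ℝ) : ℂ) * covD4 A β ψ y) fun β _ => (hXc β).mul (hcov β)]
  simp only [ContinuousLinearMap.sum_apply]
  refine Finset.sum_congr rfl fun β _ => ?_
  rw [fderiv_fun_mul (hXc β) (hcov β)]
  simp only [ContinuousLinearMap.add_apply, ContinuousLinearMap.smul_apply, smul_eq_mul]
  rw [fderiv_ofReal' ((contDiff_pi.1 hX β).differentiable (by simp)).differentiableAt]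
  ring

lemma fderiv_symm (hψ : ContDiff ℝ (⊤ : ℕ∞) ψ) (x v w : E4) :
    fderiv ℝ (fun y => fderiv ℝ ψ y v) x w = fderiv ℝ (fun y => fderiv ℝ ψ y w) x v := by
  have hd : DifferentiableAt ℝ (fderiv ℝ ψ) x :=
    ((hψ.fderiv_right (m := (⊤ : ℕ∞)) (by simp)).differentiable (by simp)).differentiableAt
  have h1 : ∀ u : E4, fderiv ℝ (fun y => fderiv ℝ ψ y u) x = (fderiv ℝ (fderiv ℝ ψ) x).flip u := by
    intro u
    have := fderiv_clm_apply (c := fderiv ℝ ψ) (u := fun _ => u) hd (differentiableAt_const u)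
    simp only [fderiv_fun_const, Pi.zero_apply] at this
    simp [this]
  rw [h1, h1]
  exact (hψ.contDiffAt.isSymmSndFDerivAt (by rw [minSmoothness_of_isRCLikeNormedField]; exact WithTop.coe_le_coe.mpr le_top)) w v

end helpers2

/-- **Lie derivative of the current one-form.** For smooth real one-form `A`, smooth
`φ, ψ : ℝ⁴ → ℂ` and a smooth vector field `X`, with `ω_α = φ · conj(D_α ψ)`:
`(ℒ_X ω)_α = D_X φ · conj(D_α ψ) + φ · conj(D_α D_X ψ) − i (Σ_β X^β F_{βα}) φ · conj(ψ)`
everywhere on `ℝ⁴`. -/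
theorem lieDeriv_current (A : E4 → Fin 4 → ℝ) (hA : ContDiff ℝ (⊤ : ℕ∞) A)
    (φ : E4 → ℂ) (hφ : ContDiff ℝ (⊤ : ℕ∞) φ) (ψ : E4 → ℂ) (hψ : ContDiff ℝ (⊤ : ℕ∞) ψ)
    (X : E4 → Fin 4 → ℝ) (hX : ContDiff ℝ (⊤ : ℕ∞) X) (α : Fin 4) (x : E4) :
    lieDerivOneForm X (fun β y => φ y * (starRingEnd ℂ) (covD4 A β ψ y)) α x =
      covDX A X φ x * (starRingEnd ℂ) (covD4 A α ψ x) +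
        φ x * (starRingEnd ℂ) (covD4 A α (covDX A X ψ) x) -
        Complex.I * ((∑ β, X x β * curv A β α x : ℝ) : ℂ) * φ x *
          (starRingEnd ℂ) (ψ x) := by
  have hφd : DifferentiableAt ℝ φ x := (hφ.differentiable (by simp)).differentiableAt
  have hψd : DifferentiableAt ℝ ψ x := (hψ.differentiable (by simp)).differentiableAt
  have hcovd : ∀ γ : Fin 4, DifferentiableAt ℝ (covD4 A γ ψ) x := fun γ =>
    ((contDiff_covD4 hA hψ γ).differentiable (by simp)).differentiableAt
  have hconjd : ∀ γ : Fin 4, DifferentiableAt ℝ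
      (fun y => (starRingEnd ℂ) (covD4 A γ ψ y)) x := fun γ => (hcovd γ).star
  have hL1 : ∀ β : Fin 4,
      fderiv ℝ (fun y => φ y * (starRingEnd ℂ) (covD4 A α ψ y)) x
        (EuclideanSpace.single β 1) =
      φ x * (starRingEnd ℂ) (fderiv ℝ (covD4 A α ψ) x (EuclideanSpace.single β 1)) +
        (starRingEnd ℂ) (covD4 A α ψ x) * fderiv ℝ φ x (EuclideanSpace.single β 1) := by
    intro β
    rw [fderiv_fun_mul hφd (hconjd α)]
    simp only [ContinuousLinearMap.add_apply, ContinuousLinearMap.smul_apply, smul_eq_mul]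
    rw [fderiv_conj' (hcovd α)]
  simp only [lieDerivOneForm]
  simp only [hL1]
  rw [show covD4 A α (covDX A X ψ) x = fderiv ℝ (covDX A X ψ) x (EuclideanSpace.single α 1)
      + Complex.I * (A x α) * covDX A X ψ x from rfl]
  rw [fderiv_covDX_apply hA hX hψ]
  simp only [fderiv_covD4_apply hA hψ]
  simp only [covDX, covD4, curv]
  simp only [map_sum, map_add, map_mul, Complex.conj_I, Complex.conj_ofReal,
    Complex.ofReal_sum, Complex.ofReal_sub, Complex.ofReal_mul]
  simp only [Finset.sum_mul, Finset.mul_sum, mul_add]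
  rw [← Finset.sum_add_distrib, ← Finset.sum_add_distrib, ← Finset.sum_add_distrib,
    ← Finset.sum_add_distrib, ← Finset.sum_sub_distrib]
  refine Finset.sum_congr rfl fun β _ => ?_
  rw [fderiv_symm hψ x (EuclideanSpace.single β 1) (EuclideanSpace.single α 1)]
  ring
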